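/- arXiv:2006.11654 — 6 statements merged into one kernel-verified Lean document; each statement's English description precedes it below -/
import Mathlib

section
/- The minimizer over the probability simplex of π ↦ λ·KL(π‖ν) + (1-λ)·KL(π‖ρ), for fixed probability vectors ν and ρ with strictly positive entries and λ ∈ [0,1], is the normalized geometric mean: π_k = ν_k^λ · ρ_k^{(1-λ)} / Z where Z = Σ_j ν_j^λ · ρ_j^{(1-λ)}. -/
open Real Finset

/-- Gibbs inequality on the finite simplex. -/
lemma gibbs {K : Type*} [Fintype K] (p q : K → ℝ) (hp : ∀ k, 0 ≤ p k)
    (hq : ∀ k, 0 < q k) (hp1 : ∑ k, p k = 1) (hq1 : ∑ k, q k = 1) :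
    0 ≤ ∑ k, p k * Real.log (p k / q k) := by
  have key : ∀ k, q k - p k ≤ -(p k * Real.log (p k / q k)) + (q k - p k) + 0 → True := fun _ _ => trivial
  have h : ∑ k, (q k - p k + p k * Real.log (p k / q k)) ≥ 0 := by
    apply Finset.sum_nonneg
    intro k _
    rcases eq_or_lt_of_le (hp k) with h0 | h0
    · simp [← h0, (hq k).le]
    · have hqk := hq k
      have hlog : Real.log (q k / p k) ≤ q k / p k - 1 :=
        Real.log_le_sub_one_of_pos (by positivity)
      have : p k * Real.log (q k / p k) ≤ q k - p k := by
        have := mul_le_mul_of_nonneg_left hlog (hp k)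
        calc p k * Real.log (q k / p k) ≤ p k * (q k / p k - 1) := this
          _ = q k - p k := by field_simp
      have hflip : Real.log (q k / p k) = - Real.log (p k / q k) := by
        rw [← Real.log_inv]; congr 1; field_simp
      rw [hflip] at this
      linarith
  have hsum : ∑ k, (q k - p k + p k * Real.log (p k / q k))
      = ∑ k, p k * Real.log (p k / q k) := by
    rw [Finset.sum_add_distrib, Finset.sum_sub_distrib, hp1, hq1]; ring
  linarith [hsum ▸ h]

/-- KL-aggregation equals log-aggregation: the minimizer over the probability
simplex of `λ·KL(π‖ν) + (1-λ)·KL(π‖ρ)` is the normalized geometric mean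
`π_k = ν_k^λ ρ_k^(1-λ) / Z`. -/
theorem stmt_1 {K : Type*} [Fintype K] [Nonempty K]
    (ν ρ : K → ℝ) (hν0 : ∀ k, 0 < ν k) (hρ0 : ∀ k, 0 < ρ k)
    (hν1 : ∑ k, ν k = 1) (hρ1 : ∑ k, ρ k = 1)
    (l : ℝ) (hl0 : 0 ≤ l) (hl1 : l ≤ 1)
    (Z : ℝ) (hZ : Z = ∑ j, ν j ^ l * ρ j ^ (1 - l))
    (pstar : K → ℝ) (hpstar : ∀ k, pstar k = ν k ^ l * ρ k ^ (1 - l) / Z)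
    (kl : (K → ℝ) → (K → ℝ) → ℝ)
    (hkl : ∀ p q, kl p q = ∑ k, p k * Real.log (p k / q k)) :
    ∀ p : K → ℝ, (∀ k, 0 ≤ p k) → ∑ k, p k = 1 →
      l * kl pstar ν + (1 - l) * kl pstar ρ ≤ l * kl p ν + (1 - l) * kl p ρ := by
  have hZ0 : 0 < Z := by
    rw [hZ]
    exact Finset.sum_pos (fun j _ => mul_pos (Real.rpow_pos_of_pos (hν0 j) l) (Real.rpow_pos_of_pos (hρ0 j) (1-l))) Finset.univ_nonempty
  have hps0 : ∀ k, 0 < pstar k := fun k => by rw [hpstar k]; exact div_pos (mul_pos (Real.rpow_pos_of_pos (hν0 k) l) (Real.rpow_pos_of_pos (hρ0 k) (1-l))) hZ0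
  have hps1 : ∑ k, pstar k = 1 := by
    simp only [hpstar, div_eq_mul_inv, ← Finset.sum_mul, ← hZ]
    field_simp
  -- key identity
  have key : ∀ p : K → ℝ, (∀ k, 0 ≤ p k) → ∑ k, p k = 1 →
      l * kl p ν + (1 - l) * kl p ρ
        = (∑ k, p k * Real.log (p k / pstar k)) - Real.log Z := by
    intro p hp hp1
    rw [hkl, hkl, Finset.mul_sum, Finset.mul_sum, ← Finset.sum_add_distrib]
    have : (∑ k, p k * Real.log (p k / pstar k)) - Real.log Z
        = ∑ k, (p k * Real.log (p k / pstar k) - p k * Real.log Z) := by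
      rw [Finset.sum_sub_distrib, ← Finset.sum_mul, hp1, one_mul]
    rw [this]
    apply Finset.sum_congr rfl
    intro k _
    rcases eq_or_lt_of_le (hp k) with h0 | h0
    · simp [← h0]
    · have hν := hν0 k; have hρ := hρ0 k; have hps := hps0 k
      have hlog : Real.log (pstar k) = l * Real.log (ν k) + (1 - l) * Real.log (ρ k)
          - Real.log Z := by
        rw [hpstar k, Real.log_div (mul_pos (Real.rpow_pos_of_pos hν l) (Real.rpow_pos_of_pos hρ (1-l))).ne' hZ0.ne',
          Real.log_mul (Real.rpow_pos_of_pos hν l).ne' (Real.rpow_pos_of_pos hρ (1-l)).ne',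
          Real.log_rpow hν, Real.log_rpow hρ]
      rw [Real.log_div h0.ne' hν.ne', Real.log_div h0.ne' hρ.ne',
        Real.log_div h0.ne' hps.ne', hlog]
      ring
  intro p hp hp1
  rw [key p hp hp1, key pstar (fun k => (hps0 k).le) hps1]
  have h1 : ∑ k, pstar k * Real.log (pstar k / pstar k) = 0 := by
    apply Finset.sum_eq_zero
    intro k _
    rw [div_self (hps0 k).ne']
    simp
  rw [h1]
  have := gibbs p pstar hp hps0 hp1 hps1
  linarith
end

section
/- For independent Gumbel random variables g_j with locations log α_j, the index of the maximum, argmax_j g_j, is independent of the value of the maximum, max_j g_j. -/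
open MeasureTheory ProbabilityTheory Real Set Filter ENNReal

lemma gumbel_hasDerivAt (c a : ℝ) (ha : a ≠ 0) (t : ℝ) :
    HasDerivAt (fun t => c / a * Real.exp (-(a * Real.exp (-t))))
      (c * Real.exp (-t) * Real.exp (-(a * Real.exp (-t)))) t := by
  have h1 : HasDerivAt (fun t : ℝ => -t) (-1) t := (hasDerivAt_id t).neg
  have h2 := (Real.hasDerivAt_exp (-t)).comp t h1
  have h3 := (h2.const_mul a).neg
  have h4 := (Real.hasDerivAt_exp (-(a * Real.exp (-t)))).comp t h3
  have h5 := h4.const_mul (c / a)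
  refine h5.congr_deriv ?_
  rw [div_mul_eq_mul_div, div_eq_iff ha]
  ring

lemma gumbel_tendsto_zero (c a : ℝ) (ha : 0 < a) :
    Tendsto (fun t => c / a * Real.exp (-(a * Real.exp (-t)))) atBot (nhds (0 : ℝ)) := by
  have h1 : Tendsto (fun t : ℝ => Real.exp (-t)) atBot atTop :=
    Real.tendsto_exp_atTop.comp tendsto_neg_atBot_atTop
  have h2 : Tendsto (fun t : ℝ => -(a * Real.exp (-t))) atBot atBot :=
    tendsto_neg_atTop_atBot.comp (h1.const_mul_atTop ha)
  have h3 : Tendsto (fun t : ℝ => Real.exp (-(a * Real.exp (-t)))) atBot (nhds 0) :=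
    Real.tendsto_exp_atBot.comp h2
  simpa using h3.const_mul (c / a)

lemma gumbel_le (c a : ℝ) (hc : 0 ≤ c) (ha : 0 < a) (t : ℝ) :
    c / a * Real.exp (-(a * Real.exp (-t))) ≤ c / a := by
  have h1 : Real.exp (-(a * Real.exp (-t))) ≤ 1 := by
    rw [Real.exp_le_one_iff]
    have : 0 < a * Real.exp (-t) := by positivity
    linarith
  nlinarith [div_nonneg hc ha.le, Real.exp_pos (-(a * Real.exp (-t)))]

lemma gumbel_integrableOn (c a x : ℝ) (hc : 0 ≤ c) (ha : 0 < a) :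
    IntegrableOn (fun t => c * Real.exp (-t) * Real.exp (-(a * Real.exp (-t)))) (Iic x) := by
  set f' : ℝ → ℝ := fun t => c * Real.exp (-t) * Real.exp (-(a * Real.exp (-t))) with hf'
  have hcont : Continuous f' := by fun_prop
  have hbot : Tendsto (fun i : ℕ => x - i) atTop atBot := by
    apply tendsto_atBot_add_const_left
    exact tendsto_neg_atTop_atBot.comp tendsto_natCast_atTop_atTop
  apply integrableOn_Iic_of_intervalIntegral_norm_bounded (c / a) x
    (fun i : ℕ => hcont.integrableOn_Ioc) hbot
  filter_upwards with i
  have hle : x - (i : ℝ) ≤ x := by simp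
  have heq : ∫ t in (x - (i : ℝ))..x, ‖f' t‖ = ∫ t in (x - (i : ℝ))..x, f' t := by
    apply intervalIntegral.integral_congr
    intro t _
    exact norm_of_nonneg (by positivity)
  rw [heq, intervalIntegral.integral_eq_sub_of_hasDerivAt
    (fun t _ => gumbel_hasDerivAt c a ha.ne' t) (hcont.intervalIntegrable _ _)]
  have h1 := gumbel_le c a hc ha x
  have h2 : 0 ≤ c / a * Real.exp (-(a * Real.exp (-(x - (i:ℝ))))) := by positivity
  linarith

lemma gumbel_lintegral (c a x : ℝ) (hc : 0 ≤ c) (ha : 0 < a) :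
    ∫⁻ t in Iic x, ENNReal.ofReal (c * Real.exp (-t) * Real.exp (-(a * Real.exp (-t))))
      = ENNReal.ofReal (c / a * Real.exp (-(a * Real.exp (-x)))) := by
  have hint := gumbel_integrableOn c a x hc ha
  rw [← ofReal_integral_eq_lintegral_ofReal hint
    (Filter.Eventually.of_forall fun t => by positivity)]
  congr 1
  have := integral_Iic_of_hasDerivAt_of_tendsto' (a := x)
    (fun t _ => gumbel_hasDerivAt c a ha.ne' t) hint (gumbel_tendsto_zero c a ha)
  rw [this, sub_zero]

/-- Independence of the argmax and the max of independent Gumbel variables with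
locations `log α_j`: the event `{argmax = k}` is independent of the event
`{max ≤ x}`. -/
theorem stmt_5 {K : ℕ} (hK : 0 < K)
    {Ω : Type*} [MeasureSpace Ω] [IsProbabilityMeasure (ℙ : Measure Ω)]
    (g : Fin K → Ω → ℝ) (hmeas : ∀ j, Measurable (g j))
    (hindep : iIndepFun g ℙ)
    (α : Fin K → ℝ) (hα : ∀ j, 0 < α j)
    (hcdf : ∀ j x, ℙ {ω | g j ω ≤ x}
      = ENNReal.ofReal (Real.exp (-Real.exp (-(x - Real.log (α j)))))) :
    ∀ (k : Fin K) (x : ℝ),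
      ℙ ({ω | ∀ j, j ≠ k → g j ω < g k ω} ∩ {ω | ∀ j, g j ω ≤ x})
        = ℙ {ω | ∀ j, j ≠ k → g j ω < g k ω} * ℙ {ω | ∀ j, g j ω ≤ x} := by
  classical
  intro k x
  set S0 := ∑ j, α j with hS0
  have hS0pos : 0 < S0 := Finset.sum_pos (fun j _ => hα j) ⟨k, Finset.mem_univ k⟩
  -- rewritten CDF
  have hcdf' : ∀ j y, ℙ (g j ⁻¹' Iic y) = ENNReal.ofReal (Real.exp (-(α j * Real.exp (-y)))) := by
    intro j y
    have h0 : Real.exp (-(y - Real.log (α j))) = α j * Real.exp (-y) := by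
      rw [neg_sub, Real.exp_sub, Real.exp_log (hα j), Real.exp_neg, div_eq_mul_inv]
    have := hcdf j y
    rw [show {ω | g j ω ≤ y} = g j ⁻¹' Iic y from rfl, h0] at this
    exact this
  -- density of each marginal
  set fden : Fin K → ℝ → ℝ≥0∞ := fun j t =>
    ENNReal.ofReal (α j * Real.exp (-t) * Real.exp (-(α j * Real.exp (-t)))) with hfden
  have hfdenmeas : ∀ j, Measurable (fden j) := by
    intro j
    apply Measurable.ennreal_ofReal
    fun_prop
  have hmap : ∀ j, (ℙ : Measure Ω).map (g j) = (volume : Measure ℝ).withDensity (fden j) := by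
    intro j
    haveI := Measure.isProbabilityMeasure_map (μ := ℙ) (hmeas j).aemeasurable
    refine Measure.ext_of_Iic _ _ (fun y => ?_)
    rw [Measure.map_apply (hmeas j) measurableSet_Iic,
      withDensity_apply _ measurableSet_Iic, gumbel_lintegral _ _ _ (hα j).le (hα j),
      div_self (hα j).ne', one_mul, hcdf' j y]
  have hIio : ∀ j y, ℙ (g j ⁻¹' Iio y) = ENNReal.ofReal (Real.exp (-(α j * Real.exp (-y)))) := by
    intro j y
    rw [← Measure.map_apply (hmeas j) measurableSet_Iio, hmap j,
      withDensity_apply _ measurableSet_Iio, setLIntegral_congr Iio_ae_eq_Iic,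
      ← withDensity_apply _ measurableSet_Iic, ← hmap j,
      Measure.map_apply (hmeas j) measurableSet_Iic, hcdf' j y]
  -- independence of g k and the rest
  set T : Finset (Fin K) := {k}ᶜ with hT
  have hmemT : ∀ j, j ∈ T ↔ j ≠ k := by
    intro j; simp [hT]
  set Y : Ω → ({j // j ∈ T} → ℝ) := fun ω j => g j.1 ω with hY
  have hYmeas : Measurable Y := measurable_pi_lambda _ fun j => hmeas j.1
  have hIF : IndepFun (g k) Y ℙ := by
    have h1 := hindep.indepFun_finset {k} T disjoint_compl_right hmeas
    have h2 := h1.comp (φ := fun v : ({j // j ∈ ({k} : Finset (Fin K))} → ℝ) =>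
      v ⟨k, Finset.mem_singleton_self k⟩) (ψ := id) (show Measurable (fun v : ({j // j ∈ ({k} : Finset (Fin K))} → ℝ) => v ⟨k, Finset.mem_singleton_self k⟩) from measurable_pi_apply _) measurable_id
    exact h2
  have hmapprod : (ℙ : Measure Ω).map (fun ω => (g k ω, Y ω))
      = ((ℙ : Measure Ω).map (g k)).prod ((ℙ : Measure Ω).map Y) :=
    (indepFun_iff_map_prod_eq_prod_map_map (hmeas k).aemeasurable hYmeas.aemeasurable).mp hIF
  -- section measure
  have hsec : ∀ t : ℝ, ((ℙ : Measure Ω).map Y) {z : {j // j ∈ T} → ℝ | ∀ j, z j < t}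
      = ENNReal.ofReal (Real.exp (-((S0 - α k) * Real.exp (-t)))) := by
    intro t
    have hzs : MeasurableSet {z : {j // j ∈ T} → ℝ | ∀ j, z j < t} := by
      have he : {z : {j // j ∈ T} → ℝ | ∀ j, z j < t} = Set.pi Set.univ (fun _ => Iio t) := by
        ext z; simp [Set.mem_pi]
      rw [he]; exact MeasurableSet.univ_pi fun _ => measurableSet_Iio
    rw [Measure.map_apply hYmeas hzs]
    have he2 : Y ⁻¹' {z | ∀ j, z j < t} = ⋂ j ∈ T, g j ⁻¹' Iio t := by
      ext ω
      simp only [Set.mem_preimage, Set.mem_setOf_eq, Set.mem_iInter, hY]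
      exact ⟨fun h j hj => h ⟨j, hj⟩, fun h j => h j.1 j.2⟩
    rw [he2, hindep.measure_inter_preimage_eq_mul T (fun i _ => measurableSet_Iio)]
    have he3 : ∀ j ∈ T, ℙ (g j ⁻¹' Iio t) = ENNReal.ofReal (Real.exp (-(α j * Real.exp (-t)))) :=
      fun j _ => hIio j t
    rw [Finset.prod_congr rfl he3,
      ← ENNReal.ofReal_prod_of_nonneg (fun _ _ => (Real.exp_pos _).le), ← Real.exp_sum]
    congr 2
    have hsum : ∑ j ∈ T, α j = S0 - α k := by
      have h4 := Finset.sum_add_sum_compl ({k} : Finset (Fin K)) α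
      rw [Finset.sum_singleton] at h4
      rw [← hT] at h4
      linarith
    rw [← hsum, Finset.sum_mul, ← Finset.sum_neg_distrib]
  -- the joint probability
  haveI hPY : IsProbabilityMeasure ((ℙ : Measure Ω).map Y) :=
    Measure.isProbabilityMeasure_map hYmeas.aemeasurable
  have hmain : ∀ y : ℝ,
      ℙ ({ω | ∀ j, j ≠ k → g j ω < g k ω} ∩ {ω | ∀ j, g j ω ≤ y})
        = ENNReal.ofReal (α k / S0 * Real.exp (-(S0 * Real.exp (-y)))) := by
    intro y
    set Sset : Set (ℝ × ({j // j ∈ T} → ℝ)) := {p | p.1 ≤ y ∧ ∀ j, p.2 j < p.1} with hSset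
    have hSmeas : MeasurableSet Sset := by
      have he : Sset = {p : ℝ × ({j // j ∈ T} → ℝ) | p.1 ≤ y}
          ∩ ⋂ j : {j // j ∈ T}, {p : ℝ × ({j // j ∈ T} → ℝ) | p.2 j < p.1} := by
        ext p; simp [hSset, Set.mem_iInter]
      rw [he]
      exact (measurableSet_le measurable_fst measurable_const).inter
        (MeasurableSet.iInter fun j =>
          measurableSet_lt measurable_snd.eval measurable_fst)
    have hev : {ω | ∀ j, j ≠ k → g j ω < g k ω} ∩ {ω | ∀ j, g j ω ≤ y}
        = (fun ω => (g k ω, Y ω)) ⁻¹' Sset := by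
      ext ω
      simp only [Set.mem_inter_iff, Set.mem_setOf_eq, Set.mem_preimage, hSset, hY]
      constructor
      · rintro ⟨hA, hB⟩
        exact ⟨hB k, fun j => hA j.1 ((hmemT j.1).mp j.2)⟩
      · rintro ⟨hx1, h2⟩
        refine ⟨fun j hj => h2 ⟨j, (hmemT j).mpr hj⟩, fun j => ?_⟩
        by_cases hj : j = k
        · subst hj; exact hx1
        · exact le_trans (h2 ⟨j, (hmemT j).mpr hj⟩).le hx1
    rw [hev, ← Measure.map_apply ((hmeas k).prodMk hYmeas) hSmeas, hmapprod,
      Measure.prod_apply hSmeas]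
    have hsect : ∀ t, ((ℙ : Measure Ω).map Y) (Prod.mk t ⁻¹' Sset)
        = Set.indicator (Iic y)
          (fun t => ENNReal.ofReal (Real.exp (-((S0 - α k) * Real.exp (-t))))) t := by
      intro t
      by_cases ht : t ≤ y
      · rw [Set.indicator_of_mem (mem_Iic.mpr ht)]
        have he : Prod.mk t ⁻¹' Sset = {z : {j // j ∈ T} → ℝ | ∀ j, z j < t} := by
          ext z; simp [hSset, ht]
        rw [he, hsec t]
      · rw [Set.indicator_of_notMem (by simpa using ht)]
        have he : Prod.mk t ⁻¹' Sset = ∅ := by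
          ext z; simp [hSset, ht]
        rw [he, measure_empty]
    rw [lintegral_congr hsect, lintegral_indicator measurableSet_Iic _, hmap k,
      restrict_withDensity measurableSet_Iic,
      lintegral_withDensity_eq_lintegral_mul _ (hfdenmeas k)
        (by apply Measurable.ennreal_ofReal; fun_prop)]
    have heq2 : ∀ t : ℝ, (fden k * fun t => ENNReal.ofReal (Real.exp (-((S0 - α k) * Real.exp (-t))))) t
        = ENNReal.ofReal (α k * Real.exp (-t) * Real.exp (-(S0 * Real.exp (-t)))) := by
      intro t
      simp only [Pi.mul_apply, hfden]
      rw [← ENNReal.ofReal_mul (mul_nonneg (mul_nonneg (hα k).le (Real.exp_pos _).le) (Real.exp_pos _).le)]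
      congr 1
      rw [mul_assoc, ← Real.exp_add]
      ring_nf
    rw [lintegral_congr heq2, gumbel_lintegral _ _ _ (hα k).le hS0pos]
  -- probability of the max event
  have hPB : ∀ y : ℝ, ℙ {ω | ∀ j, g j ω ≤ y} = ENNReal.ofReal (Real.exp (-(S0 * Real.exp (-y)))) := by
    intro y
    have he : {ω | ∀ j, g j ω ≤ y} = ⋂ j ∈ Finset.univ, g j ⁻¹' Iic y := by
      ext ω; simp
    rw [he, hindep.measure_inter_preimage_eq_mul Finset.univ (fun i _ => measurableSet_Iic)]
    have he3 : ∀ j ∈ Finset.univ, ℙ (g j ⁻¹' Iic y)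
        = ENNReal.ofReal (Real.exp (-(α j * Real.exp (-y)))) := fun j _ => hcdf' j y
    rw [Finset.prod_congr rfl he3,
      ← ENNReal.ofReal_prod_of_nonneg (fun _ _ => (Real.exp_pos _).le), ← Real.exp_sum]
    congr 2
    rw [hS0, Finset.sum_mul, ← Finset.sum_neg_distrib]
  -- probability of the argmax event
  have hPA : ℙ {ω | ∀ j, j ≠ k → g j ω < g k ω} = ENNReal.ofReal (α k / S0) := by
    have hun : {ω | ∀ j, j ≠ k → g j ω < g k ω}
        = ⋃ n : ℕ, ({ω | ∀ j, j ≠ k → g j ω < g k ω} ∩ {ω | ∀ j, g j ω ≤ (n : ℝ)}) := by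
      ext ω
      simp only [Set.mem_iUnion, Set.mem_inter_iff, Set.mem_setOf_eq]
      constructor
      · intro h
        haveI : Nonempty (Fin K) := ⟨k⟩
        obtain ⟨n, hn⟩ := exists_nat_ge (Finset.univ.sup' Finset.univ_nonempty (fun j => g j ω))
        exact ⟨n, h, fun j => le_trans (Finset.le_sup' (fun j => g j ω) (Finset.mem_univ j)) hn⟩
      · rintro ⟨n, h, -⟩; exact h
    have hmono : Monotone (fun n : ℕ =>
        {ω | ∀ j, j ≠ k → g j ω < g k ω} ∩ {ω | ∀ j, g j ω ≤ (n : ℝ)}) := by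
      intro m n hmn
      apply Set.inter_subset_inter_right
      intro ω hω j
      exact le_trans (hω j) (by exact_mod_cast hmn)
    have h1 := tendsto_measure_iUnion_atTop (μ := (ℙ : Measure Ω)) hmono
    rw [← hun] at h1
    have h2 : Tendsto (fun n : ℕ => ℙ ({ω | ∀ j, j ≠ k → g j ω < g k ω}
        ∩ {ω | ∀ j, g j ω ≤ (n : ℝ)})) atTop (nhds (ENNReal.ofReal (α k / S0))) := by
      have h3 : Tendsto (fun n : ℕ => α k / S0 * Real.exp (-(S0 * Real.exp (-(n : ℝ)))))
          atTop (nhds (α k / S0)) := by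
        have h4 : Tendsto (fun n : ℕ => -(S0 * Real.exp (-(n : ℝ)))) atTop (nhds 0) := by
          have h5 : Tendsto (fun n : ℕ => Real.exp (-(n : ℝ))) atTop (nhds 0) :=
            Real.tendsto_exp_atBot.comp
              (tendsto_neg_atTop_atBot.comp tendsto_natCast_atTop_atTop)
          have := (h5.const_mul S0).neg
          simpa using this
        have h6 := (Real.continuous_exp.tendsto 0).comp h4
        rw [Real.exp_zero] at h6
        have := h6.const_mul (α k / S0)
        simpa using this
      have h7 := ENNReal.tendsto_ofReal h3
      refine h7.congr fun n => ?_
      rw [hmain (n : ℝ)]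
    exact tendsto_nhds_unique h1 h2
  rw [hmain x, hPA, hPB x, ← ENNReal.ofReal_mul (div_nonneg (hα k).le hS0pos.le)]
end

section
/- Let X_I = argmax_j (log p_j + g_j) and X_{I'} = argmax_j (log p'_j + g_j) for the same realization of the Gumbel noise vector g, where p, p' are strictly positive probability vectors. If X_I = i and p'_i/p_i ≥ p'_j/p_j for some j ≠ i, then X_{I'} ≠ j. In other words, the Gumbel-Max SCM satisfies counterfactual stability. -/
open Real Finset

/-- Counterfactual stability of the Gumbel-Max SCM: with shared Gumbel noise `g`,
if the observed outcome under `p` is `i` and `p'_i/p_i ≥ p'_j/p_j` for `j ≠ i`,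
then the counterfactual outcome under `p'` cannot be `j`. -/
theorem stmt_6 {K : ℕ} (p p' : Fin K → ℝ)
    (hp0 : ∀ k, 0 < p k) (hp'0 : ∀ k, 0 < p' k)
    (hp1 : ∑ k, p k = 1) (hp'1 : ∑ k, p' k = 1)
    (g : Fin K → ℝ) (i j : Fin K) (hij : j ≠ i)
    (hobs : ∀ l, l ≠ i → Real.log (p l) + g l < Real.log (p i) + g i)
    (hratio : p' j / p j ≤ p' i / p i) :
    ¬ (∀ l, l ≠ j → Real.log (p' l) + g l < Real.log (p' j) + g j) := by
  intro h
  have h1 := h i (Ne.symm hij)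
  have h2 := hobs j hij
  have hlog : Real.log (p' i / p i) < Real.log (p' j / p j) := by
    rw [Real.log_div (hp'0 i).ne' (hp0 i).ne', Real.log_div (hp'0 j).ne' (hp0 j).ne']
    linarith
  have := Real.log_le_log (div_pos (hp'0 j) (hp0 j)) hratio
  linarith
end

section
/- Contrapositive form of counterfactual stability for the Gumbel-Max mechanism: if there exists a noise vector g with argmax_j(log p_j + g_j) = i and argmax_j(log p'_j + g_j) = j for some j ≠ i, then p'_i/p_i < p'_j/p_j. -/
open Real Finset

/-- Contrapositive form of counterfactual stability: if some shared noise `g`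
yields factual outcome `i` and counterfactual outcome `j ≠ i`, then the relative
likelihood of `i` strictly decreased compared to `j`. -/
theorem stmt_8 {K : ℕ} (p p' : Fin K → ℝ)
    (hp0 : ∀ k, 0 < p k) (hp'0 : ∀ k, 0 < p' k)
    (hp1 : ∑ k, p k = 1) (hp'1 : ∑ k, p' k = 1)
    (g : Fin K → ℝ) (i j : Fin K) (hij : j ≠ i)
    (hobs : ∀ l, l ≠ i → Real.log (p l) + g l < Real.log (p i) + g i)
    (hcf : ∀ l, l ≠ j → Real.log (p' l) + g l < Real.log (p' j) + g j) :
    p' i / p i < p' j / p j := by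
  have h1 := hobs j hij
  have h2 := hcf i (Ne.symm hij)
  have h3 : Real.log (p' i) + Real.log (p j) < Real.log (p' j) + Real.log (p i) := by
    linarith
  have h4 : Real.log (p' i * p j) < Real.log (p' j * p i) := by
    rw [Real.log_mul (hp'0 i).ne' (hp0 j).ne', Real.log_mul (hp'0 j).ne' (hp0 i).ne']
    exact h3
  have h5 : p' i * p j < p' j * p i :=
    (Real.log_lt_log_iff (mul_pos (hp'0 i) (hp0 j)) (mul_pos (hp'0 j) (hp0 i))).mp h4
  rw [div_lt_div_iff₀ (hp0 i) (hp0 j)]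
  linarith
end

section
/- Conditional distribution of the non-maximal Gumbels: let g_1,…,g_K be independent Gumbels with locations log α_j, and condition on the event {argmax = k', g_{k'} = m}. Then for j ≠ k', the g_j are conditionally independent with distribution equal to a Gumbel(log α_j) truncated to (-∞, m], i.e. conditional CDF F_j(x) = exp(-exp(-(x - log α_j)))/exp(-exp(-(m - log α_j))) for x ≤ m. -/
open MeasureTheory ProbabilityTheory Real Finset Topology Filter

lemma aux_Iio_16 {Ω : Type*} [MeasureSpace Ω] (f : Ω → ℝ) (L m : ℝ)
    (hc : ∀ c, ℙ {ω | f ω ≤ c} = ENNReal.ofReal (Real.exp (-Real.exp (-(c - L))))) :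
    ℙ {ω | f ω < m} = ENNReal.ofReal (Real.exp (-Real.exp (-(m - L)))) := by
  have hset : {ω | f ω < m} = ⋃ n : ℕ, {ω | f ω ≤ m - 1/(n+1)} := by
    ext ω
    simp only [Set.mem_setOf_eq, Set.mem_iUnion]
    constructor
    · intro h
      obtain ⟨n, hn⟩ := exists_nat_one_div_lt (sub_pos.mpr h)
      exact ⟨n, by push_cast at hn ⊢; linarith⟩
    · rintro ⟨n, hn⟩
      have : (0:ℝ) < 1/(n+1) := by positivity
      linarith
  have hmono : Monotone (fun n : ℕ => {ω | f ω ≤ m - 1/((n:ℝ)+1)}) := by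
    intro a b hab ω hω
    simp only [Set.mem_setOf_eq] at *
    have hab' : (a:ℝ) ≤ b := by exact_mod_cast hab
    have : (1:ℝ)/(b+1) ≤ 1/(a+1) := by
      apply one_div_le_one_div_of_le
      · positivity
      · linarith
    linarith
  have h1 := tendsto_measure_iUnion_atTop (μ := (ℙ : Measure Ω)) hmono
  rw [← hset] at h1
  have hcont : Continuous fun c : ℝ => ENNReal.ofReal (Real.exp (-Real.exp (-(c - L)))) := by
    exact ENNReal.continuous_ofReal.comp (by continuity)
  have htend : Filter.Tendsto (fun n : ℕ => m - 1/((n:ℝ)+1)) Filter.atTop (𝓝 m) := by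
    have h0 := tendsto_one_div_add_atTop_nhds_zero_nat (𝕜 := ℝ)
    simpa using Filter.Tendsto.const_sub m h0
  have h2 : Filter.Tendsto (fun n : ℕ => ℙ {ω | f ω ≤ m - 1/((n:ℝ)+1)}) Filter.atTop
      (𝓝 (ENNReal.ofReal (Real.exp (-Real.exp (-(m - L)))))) := by
    simp only [hc]
    exact (hcont.tendsto m).comp htend
  exact tendsto_nhds_unique h1 h2

/-- Conditional distribution of the non-maximal Gumbels (Top-down sampling):
conditioning on `{argmax = k', g_{k'} = m}` amounts (by independence of `g_{k'}`
from the rest) to conditioning the remaining coordinates on `{∀ j ≠ k', g j < m}`;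
the `g j`, `j ≠ k'`, are then conditionally independent with CDF equal to that
of a `Gumbel(log α_j)` truncated to `(-∞, m]`:
`F_j(x) = exp(-exp(-(x - log α_j))) / exp(-exp(-(m - log α_j)))` for `x ≤ m`. -/
theorem stmt_16 {K : ℕ}
    {Ω : Type*} [MeasureSpace Ω] [IsProbabilityMeasure (ℙ : Measure Ω)]
    (g : Fin K → Ω → ℝ) (hmeas : ∀ j, Measurable (g j))
    (hindep : iIndepFun g ℙ)
    (α : Fin K → ℝ) (hα : ∀ j, 0 < α j)
    (hcdf : ∀ j x, ℙ {ω | g j ω ≤ x}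
      = ENNReal.ofReal (Real.exp (-Real.exp (-(x - Real.log (α j))))))
    (k' : Fin K) (m : ℝ) (x : Fin K → ℝ) (hx : ∀ j, j ≠ k' → x j ≤ m) :
    ProbabilityTheory.cond ℙ {ω | ∀ j, j ≠ k' → g j ω < m}
        {ω | ∀ j, j ≠ k' → g j ω ≤ x j}
      = ENNReal.ofReal (∏ j ∈ Finset.univ.filter (· ≠ k'),
          Real.exp (-Real.exp (-(x j - Real.log (α j)))) /
            Real.exp (-Real.exp (-(m - Real.log (α j))))) := by
  classical
  set S := Finset.univ.filter (· ≠ k') with hS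
  set Em : Fin K → ℝ := fun j => Real.exp (-Real.exp (-(m - Real.log (α j)))) with hEm
  set Ex : Fin K → ℝ := fun j => Real.exp (-Real.exp (-(x j - Real.log (α j)))) with hEx
  have hAset : {ω | ∀ j, j ≠ k' → g j ω < m} = ⋂ j ∈ S, g j ⁻¹' Set.Iio m := by
    ext ω; simp [hS, Set.mem_iInter]
  have hABset : {ω | ∀ j, j ≠ k' → g j ω < m} ∩ {ω | ∀ j, j ≠ k' → g j ω ≤ x j}
      = ⋂ j ∈ S, g j ⁻¹' (Set.Iio m ∩ Set.Iic (x j)) := by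
    ext ω
    simp only [Set.mem_inter_iff, Set.mem_setOf_eq, Set.mem_iInter, Set.mem_preimage,
      Set.mem_Iio, Set.mem_Iic, hS, Finset.mem_filter, Finset.mem_univ, true_and]
    exact ⟨fun h j hj => ⟨h.1 j hj, h.2 j hj⟩,
      fun h => ⟨fun j hj => (h j hj).1, fun j hj => (h j hj).2⟩⟩
  have hIio : ∀ j, ℙ (g j ⁻¹' Set.Iio m) = ENNReal.ofReal (Em j) := fun j =>
    aux_Iio_16 (g j) (Real.log (α j)) m (hcdf j)
  have hIic : ∀ j (c : ℝ), ℙ (g j ⁻¹' Set.Iic c)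
      = ENNReal.ofReal (Real.exp (-Real.exp (-(c - Real.log (α j))))) := fun j c => hcdf j c
  have hNum : ∀ j ∈ S, ℙ (g j ⁻¹' (Set.Iio m ∩ Set.Iic (x j))) = ENNReal.ofReal (Ex j) := by
    intro j hj
    have hjk : j ≠ k' := by simpa [hS] using hj
    refine le_antisymm ?_ ?_
    · calc ℙ (g j ⁻¹' (Set.Iio m ∩ Set.Iic (x j))) ≤ ℙ (g j ⁻¹' Set.Iic (x j)) :=
        measure_mono (Set.preimage_mono Set.inter_subset_right)
      _ = ENNReal.ofReal (Ex j) := hIic j (x j)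
    · have hsub : Set.Iio (x j) ⊆ Set.Iio m ∩ Set.Iic (x j) := fun y hy =>
        ⟨lt_of_lt_of_le (Set.mem_Iio.mp hy) (hx j hjk), Set.mem_Iic.mpr (Set.mem_Iio.mp hy).le⟩
      calc ENNReal.ofReal (Ex j) = ℙ (g j ⁻¹' Set.Iio (x j)) :=
        (aux_Iio_16 (g j) (Real.log (α j)) (x j) (hcdf j)).symm
      _ ≤ ℙ (g j ⁻¹' (Set.Iio m ∩ Set.Iic (x j))) := measure_mono (Set.preimage_mono hsub)
  have hcomap : ∀ (j : Fin K) (t : Set ℝ), MeasurableSet t →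
      MeasurableSet[MeasurableSpace.comap (g j) inferInstance] (g j ⁻¹' t) :=
    fun j t ht => ⟨t, ht, rfl⟩
  have hPA : ℙ {ω | ∀ j, j ≠ k' → g j ω < m} = ∏ j ∈ S, ENNReal.ofReal (Em j) := by
    rw [hAset, hindep.meas_biInter (fun j _ => hcomap j _ measurableSet_Iio)]
    exact Finset.prod_congr rfl fun j _ => hIio j
  have hPAB : ℙ ({ω | ∀ j, j ≠ k' → g j ω < m} ∩ {ω | ∀ j, j ≠ k' → g j ω ≤ x j})
      = ∏ j ∈ S, ENNReal.ofReal (Ex j) := by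
    rw [hABset, hindep.meas_biInter
      (fun j _ => hcomap j _ (measurableSet_Iio.inter measurableSet_Iic))]
    exact Finset.prod_congr rfl hNum
  have hmeasA : MeasurableSet {ω | ∀ j, j ≠ k' → g j ω < m} := by
    rw [hAset]
    exact MeasurableSet.biInter (S.countable_toSet) fun j _ => (hmeas j) measurableSet_Iio
  rw [ProbabilityTheory.cond_apply hmeasA, hPA, hPAB]
  have hEmpos : ∀ j ∈ S, 0 < Em j := fun j _ => Real.exp_pos _
  have hExnn : ∀ j ∈ S, 0 ≤ Ex j := fun j _ => (Real.exp_pos _).le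
  have hDpos : 0 < ∏ j ∈ S, Em j := Finset.prod_pos hEmpos
  rw [← ENNReal.ofReal_prod_of_nonneg hExnn,
    ← ENNReal.ofReal_prod_of_nonneg (fun j hj => (hEmpos j hj).le),
    Finset.prod_div_distrib, ENNReal.ofReal_div_of_pos hDpos, div_eq_mul_inv, mul_comm]
end

section
/- Under the Gumbel-Max mechanism with shared noise, if the intervention strictly increases the relative likelihood of the observed outcome i versus every alternative (p'_i/p_i > p'_j/p_j for all j ≠ i), then the counterfactual outcome equals the observed outcome: argmax_j(log p'_j + g_j) = i whenever argmax_j(log p_j + g_j) = i. -/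
open Real Finset

/-- If the intervention strictly increases the relative likelihood of the
observed outcome `i` versus every alternative, then the Gumbel-Max
counterfactual outcome equals the observed outcome. -/
theorem stmt_19 {K : ℕ} (p p' : Fin K → ℝ)
    (hp0 : ∀ k, 0 < p k) (hp'0 : ∀ k, 0 < p' k)
    (hp1 : ∑ k, p k = 1) (hp'1 : ∑ k, p' k = 1)
    (g : Fin K → ℝ) (i : Fin K)
    (hobs : ∀ l, l ≠ i → Real.log (p l) + g l < Real.log (p i) + g i)
    (hratio : ∀ j, j ≠ i → p' j / p j < p' i / p i) :
    ∀ j, j ≠ i → Real.log (p' j) + g j < Real.log (p' i) + g i := by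
  intro j hj
  have h1 := hobs j hj
  have h2 : Real.log (p' j / p j) < Real.log (p' i / p i) :=
    Real.log_lt_log (div_pos (hp'0 j) (hp0 j)) (hratio j hj)
  rw [Real.log_div (hp'0 j).ne' (hp0 j).ne', Real.log_div (hp'0 i).ne' (hp0 i).ne'] at h2
  linarith
end
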